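/- arXiv:2411.14239 — 3 statements merged into one kernel-verified Lean document; each statement's English description precedes it below -/
import Mathlib

section
/- Let ν ∈ ℝ and H₀, H₁, H₂ be Hilbert spaces. For linear relations A, C ⊆ L²_ν(ℝ,H₀) × L²_ν(ℝ,H₁) and B ⊆ L²_ν(ℝ,H₁) × L²_ν(ℝ,H₂): (1) (BA)^{*_ν} ⊇ closure(A^{*_ν} B^{*_ν}) and (A+C)^{*_ν} ⊇ closure(A^{*_ν} + C^{*_ν}); (2) if B is a closed linear subspace and A ∈ ℒ(L²_ν(ℝ,H₀), L²_ν(ℝ,H₁)) is bounded and everywhere defined, then (BA)^{*_ν} = closure(A^{*_ν} B^{*_ν}); (3) if B ∈ ℒ(L²_ν(ℝ,H₁), L²_ν(ℝ,H₂)) is bounded and everywhere defined and A is either a closed linear subspace or a densely defined linear operator, then (BA)^{*_ν} = A^{*_ν} B^{*_ν}. -/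
open MeasureTheory Complex Real
open scoped ENNReal InnerProductSpace ComplexInnerProductSpace

noncomputable section

/-- The exponentially weighted measure `e^{-2νt} dt` on `ℝ`. -/
def wMeas (ν : ℝ) : Measure ℝ :=
  volume.withDensity fun t => ENNReal.ofReal (Real.exp (-2 * ν * t))

/-- The exponentially weighted space `L²_ν(ℝ, H)`. -/
abbrev Lnu (ν : ℝ) (H : Type*) [NormedAddCommGroup H] : Type _ := Lp H 2 (wMeas ν)

variable {H H₀ H₁ H₂ : Type*}

/-- The ν-product `⟨f,g⟩_ν = ∫ ⟨f(t), g(t)⟩_H dt` (integral w.r.t. Lebesgue measure). -/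
def nuPair [NormedAddCommGroup H] [InnerProductSpace ℂ H] {a b : ℝ}
    (f : Lnu a H) (g : Lnu b H) : ℂ :=
  ∫ t : ℝ, ⟪f t, g t⟫_ℂ

/-- The weak time derivative, as a linear relation on `L²_ν(ℝ,H)`. -/
def derivRel (ν : ℝ) (H : Type*) [NormedAddCommGroup H] [InnerProductSpace ℂ H]
    [CompleteSpace H] : Set (Lnu ν H × Lnu ν H) :=
  {p | ∀ φ : ℝ → ℝ, ContDiff ℝ (⊤ : ℕ∞) φ → HasCompactSupport φ →
      (∫ t : ℝ, φ t • p.2 t) = - ∫ t : ℝ, deriv φ t • p.1 t}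

/-- The ν-adjoint relation (with respect to the ν-product pairing). -/
def dualRel [NormedAddCommGroup H₀] [InnerProductSpace ℂ H₀]
    [NormedAddCommGroup H₁] [InnerProductSpace ℂ H₁] (a b : ℝ)
    (A : Set (Lnu a H₀ × Lnu a H₁)) : Set (Lnu b H₁ × Lnu b H₀) :=
  {g | ∀ f ∈ A, nuPair f.1 g.2 = nuPair f.2 g.1}

/-- The adjoint of a relation between Hilbert spaces (w.r.t. the inner products). -/
def adjRel {X Y : Type*} [NormedAddCommGroup X] [InnerProductSpace ℂ X]
    [NormedAddCommGroup Y] [InnerProductSpace ℂ Y] (A : Set (X × Y)) : Set (Y × X) :=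
  {g | ∀ f ∈ A, (⟪f.1, g.2⟫_ℂ) = ⟪f.2, g.1⟫_ℂ}

/-- Pointwise lift of a (partial) operator `A` to `L²_ν`. -/
def liftRel [NormedAddCommGroup H₀] [InnerProductSpace ℂ H₀]
    [NormedAddCommGroup H₁] [InnerProductSpace ℂ H₁] (ν : ℝ)
    (A : H₀ →ₗ.[ℂ] H₁) : Set (Lnu ν H₀ × Lnu ν H₁) :=
  {p | ∀ᵐ t : ℝ, ∃ h : p.1 t ∈ A.domain, p.2 t = A ⟨p.1 t, h⟩}

def relDom {X Y : Type*} (A : Set (X × Y)) : Set X := {x | ∃ y, (x, y) ∈ A}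
def relRan {X Y : Type*} (A : Set (X × Y)) : Set Y := {y | ∃ x, (x, y) ∈ A}
def relKer {X Y : Type*} [Zero Y] (A : Set (X × Y)) : Set X := {x | (x, 0) ∈ A}
def relComp {X Y Z : Type*} (B : Set (Y × Z)) (A : Set (X × Y)) : Set (X × Z) :=
  {p | ∃ y, (p.1, y) ∈ A ∧ (y, p.2) ∈ B}
def relAdd {X Y : Type*} [Add Y] (A C : Set (X × Y)) : Set (X × Y) :=
  {p | ∃ y₁ y₂, (p.1, y₁) ∈ A ∧ (p.1, y₂) ∈ C ∧ p.2 = y₁ + y₂}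
def IsSingleValued {X Y : Type*} (A : Set (X × Y)) : Prop :=
  ∀ x y₁ y₂, (x, y₁) ∈ A → (x, y₂) ∈ A → y₁ = y₂

/-- The ν-annihilator of a subset of `L²_a(ℝ,H)` inside `L²_b(ℝ,H)`. -/
def nuAnn [NormedAddCommGroup H] [InnerProductSpace ℂ H] (a b : ℝ) (F : Set (Lnu a H)) :
    Set (Lnu b H) := {g | ∀ f ∈ F, nuPair f g = 0}

end



noncomputable section AuxS7
namespace S7


lemma wDens_meas (ν : ℝ) : Measurable fun t : ℝ => ENNReal.ofReal (Real.exp (-2 * ν * t)) :=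
  ((measurable_id.const_mul _).exp).ennreal_ofReal

lemma wMeas_ac (ν : ℝ) : wMeas ν ≪ volume := withDensity_absolutelyContinuous _ _

lemma volume_ac (ν : ℝ) : (volume : Measure ℝ) ≪ wMeas ν :=
  withDensity_absolutelyContinuous' (wDens_meas ν).aemeasurable
    (Filter.Eventually.of_forall fun t => (ENNReal.ofReal_pos.mpr (Real.exp_pos _)).ne')

lemma ae_transfer {p q : ℝ} {f g : ℝ → H} (h : f =ᵐ[wMeas p] g) :
    f =ᵐ[wMeas q] g := (wMeas_ac q).ae_eq ((volume_ac p).ae_eq h)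

variable [NormedAddCommGroup H] [InnerProductSpace ℂ H]

/-- multiplication by `e^{(a-b)t}`, as a pointwise function -/
def sFun (a b : ℝ) (g : ℝ → H) : ℝ → H := fun t => Real.exp ((a - b) * t) • g t

lemma key_lintegral (a b : ℝ) (g : ℝ → H) (hg : AEStronglyMeasurable g volume) :
    ∫⁻ t, (‖sFun a b g t‖₊ : ℝ≥0∞) ^ (2:ℝ) ∂(wMeas a)
      = ∫⁻ t, (‖g t‖₊ : ℝ≥0∞) ^ (2:ℝ) ∂(wMeas b) := by
  have hsm : AEStronglyMeasurable (sFun a b g) volume :=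
    ((Real.continuous_exp.comp (continuous_const.mul continuous_id)).aestronglyMeasurable).smul hg
  rw [wMeas, wMeas,
    lintegral_withDensity_eq_lintegral_mul₀ (wDens_meas a).aemeasurable
      (show AEMeasurable (fun t => (‖sFun a b g t‖₊ : ℝ≥0∞) ^ (2:ℝ)) _ from hsm.enorm.pow_const _),
    lintegral_withDensity_eq_lintegral_mul₀ (wDens_meas b).aemeasurable
      (show AEMeasurable (fun t => (‖g t‖₊ : ℝ≥0∞) ^ (2:ℝ)) _ from hg.enorm.pow_const _)]
  refine lintegral_congr fun t => ?_
  simp only [Pi.mul_apply, sFun, nnnorm_smul, ENNReal.coe_mul,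
    ENNReal.mul_rpow_of_nonneg _ _ (by norm_num : (0:ℝ) ≤ 2)]
  rw [← enorm_eq_nnnorm, Real.enorm_eq_ofReal (Real.exp_pos _).le,
    ENNReal.ofReal_rpow_of_pos (Real.exp_pos _), ← Real.exp_mul, ← mul_assoc,
    ← ENNReal.ofReal_mul (Real.exp_pos _).le, ← Real.exp_add]
  ring_nf


lemma sFun_aesm {b : ℝ} (a : ℝ) (g : Lnu b H) : AEStronglyMeasurable (sFun a b ⇑g) volume :=
  ((Real.continuous_exp.comp (continuous_const.mul continuous_id)).aestronglyMeasurable).smul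
    ((Lp.aestronglyMeasurable g).mono_ac (volume_ac b))

lemma key_eLpNorm {b : ℝ} (a : ℝ) (g : Lnu b H) :
    eLpNorm (sFun a b ⇑g) 2 (wMeas a) = eLpNorm (⇑g) 2 (wMeas b) := by
  have h2 : (2:ℝ≥0∞) ≠ 0 := by norm_num
  have h2' : (2:ℝ≥0∞) ≠ ∞ := by norm_num
  rw [eLpNorm_eq_lintegral_rpow_enorm_toReal h2 h2', eLpNorm_eq_lintegral_rpow_enorm_toReal h2 h2']
  congr 1
  have := key_lintegral a b ⇑g ((Lp.aestronglyMeasurable g).mono_ac (volume_ac b))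
  simpa only [ENNReal.toReal_ofNat, enorm_eq_nnnorm] using this

lemma memLp_sFun {b : ℝ} (a : ℝ) (g : Lnu b H) : MemLp (sFun a b ⇑g) 2 (wMeas a) :=
  ⟨(sFun_aesm a g).mono_ac (wMeas_ac a), by rw [key_eLpNorm a g]; exact (Lp.memLp g).2⟩

/-- Multiplication by `e^{(a-b)t}` as a map `L²_b → L²_a`. -/
def shiftL {b : ℝ} (a : ℝ) (g : Lnu b H) : Lnu a H := (memLp_sFun a g).toLp _

lemma shiftL_coeFn {b : ℝ} (a : ℝ) (g : Lnu b H) :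
    ⇑(shiftL a g : Lnu a H) =ᵐ[volume] sFun a b ⇑g :=
  (volume_ac a).ae_eq ((memLp_sFun a g).coeFn_toLp)

lemma shiftL_coeFn' {b : ℝ} (a c : ℝ) (g : Lnu b H) :
    ⇑(shiftL a g : Lnu a H) =ᵐ[wMeas c] sFun a b ⇑g :=
  (wMeas_ac c).ae_eq (shiftL_coeFn a g)

lemma shiftL_shiftL {b : ℝ} (a : ℝ) (g : Lnu b H) :
    shiftL b (shiftL a g : Lnu a H) = g := by
  refine Lp.ext (μ := wMeas b) ?_
  refine (shiftL_coeFn' b b (shiftL a g)).trans ?_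
  have h0 : ⇑(shiftL a g : Lnu a H) =ᵐ[wMeas b] sFun a b ⇑g := shiftL_coeFn' a b g
  filter_upwards [h0] with t ht
  show Real.exp ((b - a) * t) • (shiftL a g : Lnu a H) t = g t
  rw [ht]
  show Real.exp ((b - a) * t) • (Real.exp ((a - b) * t) • g t) = g t
  rw [smul_smul, ← Real.exp_add]
  ring_nf
  simp

lemma shiftL_add {b : ℝ} (a : ℝ) (g g' : Lnu b H) :
    (shiftL a (g + g') : Lnu a H) = shiftL a g + shiftL a g' := by
  refine Lp.ext (μ := wMeas a) ?_
  have h1 := shiftL_coeFn' a a (g + g')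
  have h2 := Lp.coeFn_add (shiftL a g : Lnu a H) (shiftL a g')
  have h3 := shiftL_coeFn' a a g
  have h4 := shiftL_coeFn' a a g'
  have h5 : ⇑(g + g') =ᵐ[wMeas a] ⇑g + ⇑g' := ae_transfer (p := b) (Lp.coeFn_add g g')
  filter_upwards [h1, h2, h3, h4, h5] with t ht1 ht2 ht3 ht4 ht5
  rw [ht1, ht2]
  show Real.exp ((a - b) * t) • (g + g') t = _
  rw [ht5]
  simp only [Pi.add_apply, ht3, ht4, smul_add]
  rfl

lemma shiftL_smul {b : ℝ} (a : ℝ) (c : ℂ) (g : Lnu b H) :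
    (shiftL a (c • g) : Lnu a H) = c • shiftL a g := by
  refine Lp.ext (μ := wMeas a) ?_
  have h1 := shiftL_coeFn' a a (c • g)
  have h2 := Lp.coeFn_smul c (shiftL a g : Lnu a H)
  have h3 := shiftL_coeFn' a a g
  have h5 : ⇑(c • g) =ᵐ[wMeas a] c • ⇑g := ae_transfer (p := b) (Lp.coeFn_smul c g)
  filter_upwards [h1, h2, h3, h5] with t ht1 ht2 ht3 ht5
  rw [ht1, ht2]
  show Real.exp ((a - b) * t) • ⇑(c • g) t = (c • ⇑(shiftL a g : Lnu a H)) t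
  rw [ht5]
  show Real.exp ((a - b) * t) • c • g t = c • (shiftL a g : Lnu a H) t
  rw [ht3]
  show Real.exp ((a - b) * t) • c • g t = c • Real.exp ((a - b) * t) • g t
  exact smul_comm _ _ _

lemma shiftL_norm {b : ℝ} (a : ℝ) (g : Lnu b H) : ‖(shiftL a g : Lnu a H)‖ = ‖g‖ := by
  rw [shiftL, Lp.norm_toLp, Lp.norm_def, key_eLpNorm a g]

lemma shiftL_sub {b : ℝ} (a : ℝ) (g g' : Lnu b H) :
    (shiftL a (g - g') : Lnu a H) = shiftL a g - shiftL a g' := by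
  have := shiftL_add a (g - g') g'
  rw [sub_add_cancel] at this
  rw [this]; abel

lemma shiftL_isometry {b : ℝ} (a : ℝ) : Isometry (shiftL a : Lnu b H → Lnu a H) := by
  refine Isometry.of_dist_eq fun g g' => ?_
  rw [dist_eq_norm, dist_eq_norm, ← shiftL_sub, shiftL_norm]

/-- `shiftL` as a homeomorphism. -/
def shiftHomeo (a b : ℝ) : Lnu b H ≃ₜ Lnu a H where
  toFun := shiftL a
  invFun := shiftL b
  left_inv := shiftL_shiftL a
  right_inv := shiftL_shiftL b
  continuous_toFun := (shiftL_isometry a).continuous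
  continuous_invFun := (shiftL_isometry b).continuous

lemma shiftL_surjective {b : ℝ} (a : ℝ) : Function.Surjective (shiftL a : Lnu b H → Lnu a H) :=
  (shiftHomeo a b).surjective

lemma toNNReal_meas (a : ℝ) : Measurable fun t : ℝ => Real.toNNReal (Real.exp (-2 * a * t)) :=
  ((measurable_id.const_mul _).exp).real_toNNReal

lemma nuPair_eq_inner {a : ℝ} (f : Lnu a H) (g : Lnu (-a) H) :
    nuPair f g = ⟪f, (shiftL a g : Lnu a H)⟫_ℂ := by
  rw [MeasureTheory.L2.inner_def]
  have hw : (∫ t, ⟪f t, (shiftL a g : Lnu a H) t⟫_ℂ ∂(wMeas a))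
      = ∫ t, Real.toNNReal (Real.exp (-2 * a * t)) • ⟪f t, (shiftL a g : Lnu a H) t⟫_ℂ :=
    integral_withDensity_eq_integral_smul (toNNReal_meas a) _
  rw [hw, nuPair]
  refine integral_congr_ae ?_
  filter_upwards [shiftL_coeFn a g] with t ht
  rw [ht]
  show ⟪f t, g t⟫_ℂ
      = Real.toNNReal (Real.exp (-2 * a * t)) • ⟪f t, Real.exp ((a - -a) * t) • g t⟫_ℂ
  rw [← Complex.coe_smul, inner_smul_right, NNReal.smul_def,
    Real.coe_toNNReal _ (Real.exp_pos _).le, Complex.real_smul, ← mul_assoc,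
    ← Complex.ofReal_mul, ← Real.exp_add]
  ring_nf
  simp


section Abstract

variable {X₀ X₁ X₂ : Type*}
  [NormedAddCommGroup X₀] [InnerProductSpace ℂ X₀]
  [NormedAddCommGroup X₁] [InnerProductSpace ℂ X₁]
  [NormedAddCommGroup X₂] [InnerProductSpace ℂ X₂]

lemma adjRel_comp_subset (A : Set (X₀ × X₁)) (B : Set (X₁ × X₂)) :
    relComp (adjRel A) (adjRel B) ⊆ adjRel (relComp B A) := by
  rintro ⟨g₁, g₂⟩ ⟨y, hyB, hyA⟩ ⟨f₁, f₂⟩ ⟨z, hzA, hzB⟩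
  exact (hyA (f₁, z) hzA).trans (hyB (z, f₂) hzB)

lemma adjRel_add_subset (A C : Set (X₀ × X₁)) :
    relAdd (adjRel A) (adjRel C) ⊆ adjRel (relAdd A C) := by
  rintro ⟨g₁, g₂⟩ ⟨y₁, y₂, hA, hC, hg⟩ ⟨f₁, f₂⟩ ⟨z₁, z₂, hzA, hzC, hf⟩
  show ⟪f₁, g₂⟫_ℂ = ⟪f₂, g₁⟫_ℂ
  rw [show g₂ = y₁ + y₂ from hg, show f₂ = z₁ + z₂ from hf, inner_add_right, inner_add_left,
    hA (f₁, z₁) hzA, hC (f₁, z₂) hzC]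

lemma adjRel_isClosed (A : Set (X₀ × X₁)) : IsClosed (adjRel A) := by
  have : adjRel A = ⋂ f ∈ A, {g : X₁ × X₀ | ⟪f.1, g.2⟫_ℂ = ⟪f.2, g.1⟫_ℂ} := by
    ext g; simp [adjRel]
  rw [this]
  exact isClosed_biInter fun f _ => isClosed_eq
    (Continuous.inner continuous_const continuous_snd)
    (Continuous.inner continuous_const continuous_fst)

lemma adjRel_zero_mem (A : Set (X₀ × X₁)) : (0 : X₁ × X₀) ∈ adjRel A := by
  intro f _; simp

lemma adjRel_add_mem {A : Set (X₀ × X₁)} {p q : X₁ × X₀}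
    (hp : p ∈ adjRel A) (hq : q ∈ adjRel A) : p + q ∈ adjRel A := by
  intro f hf
  show ⟪f.1, p.2 + q.2⟫_ℂ = ⟪f.2, p.1 + q.1⟫_ℂ
  rw [inner_add_right, inner_add_right, hp f hf, hq f hf]

lemma adjRel_smul_mem {A : Set (X₀ × X₁)} (c : ℂ) {p : X₁ × X₀}
    (hp : p ∈ adjRel A) : c • p ∈ adjRel A := by
  intro f hf
  show ⟪f.1, c • p.2⟫_ℂ = ⟪f.2, c • p.1⟫_ℂ
  rw [inner_smul_right, inner_smul_right, hp f hf]

/-- `adjRel` as a submodule. -/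
def adjSub (A : Set (X₀ × X₁)) : Submodule ℂ (X₁ × X₀) where
  carrier := adjRel A
  add_mem' := adjRel_add_mem
  zero_mem' := adjRel_zero_mem A
  smul_mem' := adjRel_smul_mem

variable [CompleteSpace X₀] [CompleteSpace X₁] [CompleteSpace X₂]

lemma adjRel_graph (Bbd : X₀ →L[ℂ] X₁) :
    adjRel {p : X₀ × X₁ | p.2 = Bbd p.1}
      = {q : X₁ × X₀ | q.2 = ContinuousLinearMap.adjoint Bbd q.1} := by
  ext ⟨g, x⟩
  constructor
  · intro h
    refine ext_inner_left ℂ fun v => ?_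
    rw [ContinuousLinearMap.adjoint_inner_right]
    exact h (v, Bbd v) rfl
  · intro hx
    rintro ⟨f₁, f₂⟩ hf
    show ⟪f₁, x⟫_ℂ = ⟪f₂, g⟫_ℂ
    rw [show x = ContinuousLinearMap.adjoint Bbd g from hx,
      ContinuousLinearMap.adjoint_inner_right, show f₂ = Bbd f₁ from hf]

/-- Part (3) at the abstract level: `(BA)* = A* B*` for bounded everywhere-defined `B`. -/
lemma adjRel_comp_graph (A : Set (X₀ × X₁)) (Bbd : X₁ →L[ℂ] X₂) :
    adjRel (relComp {p : X₁ × X₂ | p.2 = Bbd p.1} A)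
      = relComp (adjRel A) (adjRel {p : X₁ × X₂ | p.2 = Bbd p.1}) := by
  rw [adjRel_graph]
  ext ⟨g, x⟩
  constructor
  · intro h
    refine ⟨ContinuousLinearMap.adjoint Bbd g, rfl, ?_⟩
    rintro ⟨f₁, y⟩ hfy
    have := h (f₁, Bbd y) ⟨y, hfy, rfl⟩
    rw [this, ← ContinuousLinearMap.adjoint_inner_right]
  · rintro ⟨y₀, hy₀, hadj⟩ ⟨f₁, f₂⟩ ⟨y, hyA, hf₂⟩
    have h1 : (⟪f₁, x⟫_ℂ) = ⟪y, y₀⟫_ℂ := hadj (f₁, y) hyA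
    have h2 : y₀ = ContinuousLinearMap.adjoint Bbd g := hy₀
    have h3 : f₂ = Bbd y := hf₂
    show ⟪f₁, x⟫_ℂ = ⟪f₂, g⟫_ℂ
    rw [h1, h2, ContinuousLinearMap.adjoint_inner_right, h3]

/-- Part (2) at the abstract level. -/
lemma adjRel_comp_graph_left (B : Submodule ℂ (X₁ × X₂)) (hB : IsClosed (B : Set (X₁ × X₂)))
    (Abd : X₀ →L[ℂ] X₁) :
    adjRel (relComp (B : Set (X₁ × X₂)) {p : X₀ × X₁ | p.2 = Abd p.1})
      = closure (relComp (adjRel {p : X₀ × X₁ | p.2 = Abd p.1})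
          (adjRel (B : Set (X₁ × X₂)))) := by
  set gA : Set (X₀ × X₁) := {p | p.2 = Abd p.1} with hgA
  set A' := ContinuousLinearMap.adjoint Abd with hA'
  apply Set.Subset.antisymm
  · -- hard direction
    intro z hz
    let φ := WithLp.prodContinuousLinearEquiv 2 ℂ X₂ X₀
    let φB := WithLp.prodContinuousLinearEquiv 2 ℂ X₁ X₂
    have hinner : ∀ v u : WithLp 2 (X₂ × X₀),
        ⟪v, u⟫_ℂ = ⟪(φ v).1, (φ u).1⟫_ℂ + ⟪(φ v).2, (φ u).2⟫_ℂ := fun _ _ => rfl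
    have hinnerB : ∀ v u : WithLp 2 (X₁ × X₂),
        ⟪v, u⟫_ℂ = ⟪(φB v).1, (φB u).1⟫_ℂ + ⟪(φB v).2, (φB u).2⟫_ℂ := fun _ _ => rfl
    let Rw : Submodule ℂ (WithLp 2 (X₂ × X₀)) :=
      { carrier := ⇑φ ⁻¹' relComp (adjRel gA) (adjRel (B : Set (X₁ × X₂)))
        add_mem' := by
          rintro w w' ⟨y, hy, hy2⟩ ⟨y', hy', hy2'⟩
          refine Set.mem_preimage.mpr ?_
          rw [map_add]
          exact ⟨y + y', adjRel_add_mem hy hy', adjRel_add_mem hy2 hy2'⟩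
        zero_mem' := by
          refine Set.mem_preimage.mpr ?_
          rw [map_zero]
          exact ⟨0, adjRel_zero_mem _, adjRel_zero_mem _⟩
        smul_mem' := by
          rintro c w ⟨y, hy, hy2⟩
          refine Set.mem_preimage.mpr ?_
          rw [_root_.map_smul]
          exact ⟨c • y, adjRel_smul_mem c hy, adjRel_smul_mem c hy2⟩ }
    let Bw : Submodule ℂ (WithLp 2 (X₁ × X₂)) :=
      B.comap ((φB : WithLp 2 (X₁ × X₂) →L[ℂ] X₁ × X₂) : WithLp 2 (X₁ × X₂) →ₗ[ℂ] X₁ × X₂)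
    have hBw_mem : ∀ w : WithLp 2 (X₁ × X₂), w ∈ Bw ↔ φB w ∈ B := fun w => Iff.rfl
    have hBw_closed : IsClosed (Bw : Set (WithLp 2 (X₁ × X₂))) := by
      have : (Bw : Set (WithLp 2 (X₁ × X₂))) = ⇑φB ⁻¹' (B : Set (X₁ × X₂)) := rfl
      rw [this]
      exact hB.preimage φB.continuous
    haveI : CompleteSpace Bw := hBw_closed.completeSpace_coe
    have hz' : φ.symm z ∈ Rw.topologicalClosure := by
      rw [← Submodule.orthogonal_orthogonal_eq_closure, Submodule.mem_orthogonal]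
      intro u hu
      have key : ∀ y₁ y, (y₁, y) ∈ adjRel (B : Set (X₁ × X₂)) →
          ⟪y₁, (φ u).1⟫_ℂ + ⟪A' y, (φ u).2⟫_ℂ = 0 := by
        intro y₁ y hy
        have hyA : (y, A' y) ∈ adjRel gA := by
          rw [hgA, adjRel_graph]
          exact rfl
        have hmem : φ.symm (y₁, A' y) ∈ Rw := by
          show φ (φ.symm (y₁, A' y)) ∈ relComp (adjRel gA) (adjRel (B : Set (X₁ × X₂)))
          rw [ContinuousLinearEquiv.apply_symm_apply]
          exact ⟨y, hy, hyA⟩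
        have h0 := (Submodule.mem_orthogonal Rw u).mp hu _ hmem
        rw [hinner, ContinuousLinearEquiv.apply_symm_apply] at h0
        exact h0
      have hBin : (Abd (φ u).2, -(φ u).1) ∈ B := by
        have hv : φB.symm (Abd (φ u).2, -(φ u).1) ∈ Bwᗮᗮ := by
          rw [Submodule.mem_orthogonal]
          intro v hvB
          have hadj : (-(φB v).2, (φB v).1) ∈ adjRel (B : Set (X₁ × X₂)) := by
            rintro ⟨b₁, b₂⟩ hb
            have h1 : φB.symm (b₁, b₂) ∈ Bw := by
              rw [hBw_mem, ContinuousLinearEquiv.apply_symm_apply]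
              exact hb
            have h2 := (Submodule.mem_orthogonal Bw v).mp hvB _ h1
            rw [hinnerB, ContinuousLinearEquiv.apply_symm_apply] at h2
            show ⟪b₁, (φB v).1⟫_ℂ = ⟪b₂, -(φB v).2⟫_ℂ
            rw [inner_neg_right]
            linear_combination h2
          have hkey := key _ _ hadj
          rw [hinnerB v _, ContinuousLinearEquiv.apply_symm_apply,
            ← ContinuousLinearMap.adjoint_inner_left Abd, ← hA']
          rw [inner_neg_left] at hkey
          rw [inner_neg_right]
          linear_combination hkey
        rw [Submodule.orthogonal_orthogonal] at hv
        have := (hBw_mem _).mp hv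
        rwa [ContinuousLinearEquiv.apply_symm_apply] at this
      have hzrel := hz ((φ u).2, -(φ u).1) ⟨Abd (φ u).2, rfl, hBin⟩
      rw [hinner, ContinuousLinearEquiv.apply_symm_apply]
      have : (⟪(φ u).2, z.2⟫_ℂ) = ⟪-(φ u).1, z.1⟫_ℂ := hzrel
      rw [inner_neg_left] at this
      linear_combination this
    have hcl : φ.symm z ∈ closure (Rw : Set (WithLp 2 (X₂ × X₀))) := by
      rw [← Submodule.topologicalClosure_coe]
      exact hz'
    have hRcar : (Rw : Set (WithLp 2 (X₂ × X₀)))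
        = ⇑φ ⁻¹' relComp (adjRel gA) (adjRel (B : Set (X₁ × X₂))) := rfl
    have hpc : ⇑φ ⁻¹' closure (relComp (adjRel gA) (adjRel (B : Set (X₁ × X₂))))
        = closure (⇑φ ⁻¹' relComp (adjRel gA) (adjRel (B : Set (X₁ × X₂)))) :=
      φ.toHomeomorph.preimage_closure _
    rw [hRcar, ← hpc] at hcl
    have := Set.mem_preimage.mp hcl
    rwa [ContinuousLinearEquiv.apply_symm_apply] at this
  · exact closure_minimal (adjRel_comp_subset gA (B : Set (X₁ × X₂))) (adjRel_isClosed _)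

end Abstract

section Transport

variable {H₀ H₁ : Type*} [NormedAddCommGroup H₀] [InnerProductSpace ℂ H₀]
  [NormedAddCommGroup H₁] [InnerProductSpace ℂ H₁]

lemma dualRel_eq_preimage (ν : ℝ) (S : Set (Lnu ν H₀ × Lnu ν H₁)) :
    dualRel ν (-ν) S
      = Prod.map (shiftL ν : Lnu (-ν) H₁ → Lnu ν H₁) (shiftL ν : Lnu (-ν) H₀ → Lnu ν H₀)
          ⁻¹' adjRel S := by
  ext g
  refine forall₂_congr fun f hf => ?_
  rw [nuPair_eq_inner, nuPair_eq_inner]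
  exact Iff.rfl

lemma closure_psi_preimage (ν : ℝ) (S : Set (Lnu ν H₀ × Lnu ν H₁)) :
    closure (Prod.map (shiftL ν : Lnu (-ν) H₀ → Lnu ν H₀)
        (shiftL ν : Lnu (-ν) H₁ → Lnu ν H₁) ⁻¹' S)
      = Prod.map (shiftL ν : Lnu (-ν) H₀ → Lnu ν H₀)
          (shiftL ν : Lnu (-ν) H₁ → Lnu ν H₁) ⁻¹' closure S :=
  (((shiftHomeo ν (-ν)).prodCongr (shiftHomeo ν (-ν))).preimage_closure S).symm

end Transport

section RelPreimage

lemma relComp_preimage {X X' Y Y' Z Z' : Type*} (mX : X → X') (mY : Y → Y') (mZ : Z → Z')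
    (hY : Function.Surjective mY) (T₁ : Set (Y' × Z')) (T₂ : Set (X' × Y')) :
    relComp (Prod.map mY mZ ⁻¹' T₁) (Prod.map mX mY ⁻¹' T₂)
      = Prod.map mX mZ ⁻¹' relComp T₁ T₂ := by
  ext ⟨x, z⟩
  constructor
  · rintro ⟨y, h₂, h₁⟩
    exact ⟨mY y, h₂, h₁⟩
  · rintro ⟨y', h₂, h₁⟩
    obtain ⟨y, rfl⟩ := hY y'
    exact ⟨y, h₂, h₁⟩

lemma relAdd_preimage {X X' Y Y' : Type*} [AddCommGroup Y] [AddCommGroup Y']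
    (mX : X → X') (mY : Y → Y') (hY : Function.Surjective mY)
    (hadd : ∀ u v, mY (u + v) = mY u + mY v) (hsub : ∀ u v, mY (u - v) = mY u - mY v)
    (T₁ T₂ : Set (X' × Y')) :
    relAdd (Prod.map mX mY ⁻¹' T₁) (Prod.map mX mY ⁻¹' T₂)
      = Prod.map mX mY ⁻¹' relAdd T₁ T₂ := by
  ext ⟨x, y⟩
  constructor
  · rintro ⟨y₁, y₂, h₁, h₂, hy⟩
    refine ⟨mY y₁, mY y₂, h₁, h₂, ?_⟩
    show mY y = mY y₁ + mY y₂
    rw [show y = y₁ + y₂ from hy, hadd]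
  · rintro ⟨z₁, z₂, h₁, h₂, hy⟩
    obtain ⟨y₁, rfl⟩ := hY z₁
    have hy' : mY y = mY y₁ + z₂ := hy
    have h3 : mY (y - y₁) = z₂ := by rw [hsub, hy']; abel
    refine ⟨y₁, y - y₁, h₁, ?_, ?_⟩
    · show (mX x, mY (y - y₁)) ∈ T₂
      rw [h3]
      exact h₂
    · show y = y₁ + (y - y₁)
      abel

end RelPreimage

end S7
end AuxS7

open S7 in
/-- For linear relations `A, C ⊆ L²_ν(ℝ,H₀) × L²_ν(ℝ,H₁)` and
`B ⊆ L²_ν(ℝ,H₁) × L²_ν(ℝ,H₂)`: (1) `(BA)^{*_ν} ⊇ closure(A^{*_ν} B^{*_ν})` and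
`(A+C)^{*_ν} ⊇ closure(A^{*_ν} + C^{*_ν})`; (2) if `B` is a closed linear subspace and `A` is
bounded and everywhere defined, then `(BA)^{*_ν} = closure(A^{*_ν} B^{*_ν})`; (3) if `B` is
bounded and everywhere defined and `A` is a closed linear subspace or a densely defined
operator, then `(BA)^{*_ν} = A^{*_ν} B^{*_ν}`. -/
theorem statement7 (ν : ℝ) (H₀ H₁ H₂ : Type*)
    [NormedAddCommGroup H₀] [InnerProductSpace ℂ H₀] [CompleteSpace H₀]
    [NormedAddCommGroup H₁] [InnerProductSpace ℂ H₁] [CompleteSpace H₁]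
    [NormedAddCommGroup H₂] [InnerProductSpace ℂ H₂] [CompleteSpace H₂]
    (A C : Submodule ℂ (Lnu ν H₀ × Lnu ν H₁)) (B : Submodule ℂ (Lnu ν H₁ × Lnu ν H₂))
    (Abd : Lnu ν H₀ →L[ℂ] Lnu ν H₁) (Bbd : Lnu ν H₁ →L[ℂ] Lnu ν H₂) :
    -- (1) inclusions for arbitrary linear relations
    (closure (relComp (dualRel ν (-ν) (A : Set (Lnu ν H₀ × Lnu ν H₁)))
        (dualRel ν (-ν) (B : Set (Lnu ν H₁ × Lnu ν H₂)))) ⊆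
      dualRel ν (-ν) (relComp (B : Set (Lnu ν H₁ × Lnu ν H₂))
        (A : Set (Lnu ν H₀ × Lnu ν H₁)))) ∧
    (closure (relAdd (dualRel ν (-ν) (A : Set (Lnu ν H₀ × Lnu ν H₁)))
        (dualRel ν (-ν) (C : Set (Lnu ν H₀ × Lnu ν H₁)))) ⊆
      dualRel ν (-ν) (relAdd (A : Set (Lnu ν H₀ × Lnu ν H₁))
        (C : Set (Lnu ν H₀ × Lnu ν H₁)))) ∧
    -- (2) B a closed linear subspace, A bounded and everywhere defined (graph of `Abd`)
    (IsClosed (B : Set (Lnu ν H₁ × Lnu ν H₂)) →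
      dualRel ν (-ν) (relComp (B : Set (Lnu ν H₁ × Lnu ν H₂))
          {p : Lnu ν H₀ × Lnu ν H₁ | p.2 = Abd p.1}) =
        closure (relComp (dualRel ν (-ν) {p : Lnu ν H₀ × Lnu ν H₁ | p.2 = Abd p.1})
          (dualRel ν (-ν) (B : Set (Lnu ν H₁ × Lnu ν H₂))))) ∧
    -- (3) B bounded and everywhere defined (graph of `Bbd`), A a closed linear subspace
    (IsClosed (A : Set (Lnu ν H₀ × Lnu ν H₁)) →
      dualRel ν (-ν) (relComp {p : Lnu ν H₁ × Lnu ν H₂ | p.2 = Bbd p.1}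
          (A : Set (Lnu ν H₀ × Lnu ν H₁))) =
        relComp (dualRel ν (-ν) (A : Set (Lnu ν H₀ × Lnu ν H₁)))
          (dualRel ν (-ν) {p : Lnu ν H₁ × Lnu ν H₂ | p.2 = Bbd p.1})) ∧
    -- (3') B bounded and everywhere defined, A a densely defined operator
    (IsSingleValued (A : Set (Lnu ν H₀ × Lnu ν H₁)) →
      Dense (relDom (A : Set (Lnu ν H₀ × Lnu ν H₁))) →
      dualRel ν (-ν) (relComp {p : Lnu ν H₁ × Lnu ν H₂ | p.2 = Bbd p.1}
          (A : Set (Lnu ν H₀ × Lnu ν H₁))) =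
        relComp (dualRel ν (-ν) (A : Set (Lnu ν H₀ × Lnu ν H₁)))
          (dualRel ν (-ν) {p : Lnu ν H₁ × Lnu ν H₂ | p.2 = Bbd p.1})) := by
  have m0 := shiftL_surjective (H := H₀) (b := -ν) ν
  have m1 := shiftL_surjective (H := H₁) (b := -ν) ν
  refine ⟨?_, ?_, ?_, ?_, ?_⟩
  · rw [dualRel_eq_preimage, dualRel_eq_preimage, dualRel_eq_preimage,
      relComp_preimage _ _ _ m1, closure_psi_preimage]
    exact Set.preimage_mono
      (closure_minimal (adjRel_comp_subset _ _) (adjRel_isClosed _))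
  · rw [dualRel_eq_preimage, dualRel_eq_preimage, dualRel_eq_preimage,
      relAdd_preimage _ _ m0 (shiftL_add ν) (shiftL_sub ν), closure_psi_preimage]
    exact Set.preimage_mono
      (closure_minimal (adjRel_add_subset _ _) (adjRel_isClosed _))
  · intro hB
    rw [dualRel_eq_preimage, dualRel_eq_preimage, dualRel_eq_preimage,
      relComp_preimage _ _ _ m1, closure_psi_preimage,
      adjRel_comp_graph_left B hB Abd]
  · intro _
    rw [dualRel_eq_preimage, dualRel_eq_preimage, dualRel_eq_preimage,
      relComp_preimage _ _ _ m1,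
      adjRel_comp_graph (A : Set (Lnu ν H₀ × Lnu ν H₁)) Bbd]
  · intro _ _
    rw [dualRel_eq_preimage, dualRel_eq_preimage, dualRel_eq_preimage,
      relComp_preimage _ _ _ m1,
      adjRel_comp_graph (A : Set (Lnu ν H₀ × Lnu ν H₁)) Bbd]
end

section
/- Let H₀, H₁ be Hilbert spaces and A : dom(A) ⊆ H₀ → H₁ a densely defined closed linear operator. Then for every ν ∈ ℝ, the ν-adjoint of the lift A_{L²_ν} equals the lift of the Hilbert space adjoint A*, that is, (A_{L²_ν})^{*_ν} = (A*)_{L²_{−ν}} as operators from L²_{−ν}(ℝ,H₁) to L²_{−ν}(ℝ,H₀). -/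
open MeasureTheory Complex Real
open scoped ENNReal InnerProductSpace ComplexInnerProductSpace

noncomputable section Helpers
variable {H : Type*}

lemma wMeas_density_measurable (ν : ℝ) :
    Measurable fun t : ℝ => ENNReal.ofReal (Real.exp (-2 * ν * t)) :=
  ((measurable_id'.const_mul (-2 * ν)).exp).ennreal_ofReal

lemma wMeas_ae_iff {ν : ℝ} {p : ℝ → Prop} :
    (∀ᵐ t ∂(wMeas ν), p t) ↔ ∀ᵐ t, p t := by
  rw [wMeas, ae_withDensity_iff (wMeas_density_measurable ν)]
  constructor
  · intro h
    filter_upwards [h] with t ht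
    exact ht (by simp [ENNReal.ofReal_eq_zero, not_le, Real.exp_pos])
  · intro h
    filter_upwards [h] with t ht _
    exact ht

lemma Lnu.aesm_vol [NormedAddCommGroup H] {b : ℝ} (g : Lnu b H) :
    AEStronglyMeasurable (⇑g) volume := by
  obtain ⟨g', hg', heq⟩ := Lp.aestronglyMeasurable g
  exact ⟨g', hg', wMeas_ae_iff.mp heq⟩

/-- The weighted norm is in `L²(volume)`. -/
lemma Lnu.weight_memL2 [NormedAddCommGroup H] {b : ℝ} (g : Lnu b H) :
    MemLp (fun t => Real.exp (-b * t) * ‖g t‖) 2 (volume : Measure ℝ) := by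
  have hsm : AEStronglyMeasurable (fun t => Real.exp (-b * t) * ‖g t‖) (volume : Measure ℝ) :=
    (Real.continuous_exp.comp (continuous_const.mul continuous_id)).aestronglyMeasurable.mul
      (Lnu.aesm_vol g).norm
  rw [memLp_two_iff_integrable_sq hsm]
  have h2 : Integrable (fun t => ‖g t‖ ^ 2) (wMeas b) :=
    (memLp_two_iff_integrable_sq_norm (Lp.aestronglyMeasurable g)).mp (Lp.memLp g)
  unfold wMeas at h2
  rw [integrable_withDensity_iff (wMeas_density_measurable b)
    (Filter.Eventually.of_forall fun t => ENNReal.ofReal_lt_top)] at h2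
  refine h2.congr ?_
  filter_upwards with t
  rw [ENNReal.toReal_ofReal (Real.exp_nonneg _), mul_pow, sq (Real.exp (-b * t)),
    ← Real.exp_add]
  ring_nf
  exact mul_comm _ _

/-- For `g ∈ L²_b` and fixed `x`, the pairing `t ↦ ⟪x, g t⟫` is locally integrable. -/
lemma Lnu.locallyIntegrable_inner [NormedAddCommGroup H] [InnerProductSpace ℂ H]
    {b : ℝ} (g : Lnu b H) (x : H) :
    LocallyIntegrable (fun t => (⟪x, g t⟫_ℂ : ℂ)) (volume : Measure ℝ) := by
  rw [locallyIntegrable_iff]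
  intro k hk
  have hfin : IsFiniteMeasure ((volume : Measure ℝ).restrict k) :=
    ⟨by rw [Measure.restrict_apply_univ]; exact hk.measure_lt_top⟩
  obtain ⟨C, hC⟩ : ∃ C, ∀ t ∈ k, Real.exp (b * t) ≤ C := by
    obtain ⟨C, hC⟩ := hk.exists_bound_of_continuousOn
      (Continuous.continuousOn (by continuity : Continuous fun t : ℝ => Real.exp (b * t)))
    exact ⟨C, fun t ht => (le_abs_self _).trans ((Real.norm_eq_abs _) ▸ hC t ht)⟩
  have hint : Integrable (fun t => ‖x‖ * C * (Real.exp (-b * t) * ‖g t‖))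
      ((volume : Measure ℝ).restrict k) :=
    (((Lnu.weight_memL2 g).restrict k).integrable (by norm_num)).const_mul _
  refine hint.mono' (AEStronglyMeasurable.inner aestronglyMeasurable_const
    ((Lnu.aesm_vol g).restrict)) ?_
  rw [ae_restrict_iff' hk.measurableSet]
  filter_upwards with t ht
  calc ‖(⟪x, g t⟫_ℂ : ℂ)‖ ≤ ‖x‖ * ‖g t‖ := norm_inner_le_norm _ _
  _ = ‖x‖ * (Real.exp (b * t) * (Real.exp (-b * t) * ‖g t‖)) := by
      have h : Real.exp (b * t) * Real.exp (-b * t) = 1 := by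
        rw [← Real.exp_add]; simp
      rw [show Real.exp (b * t) * (Real.exp (-b * t) * ‖g t‖)
        = Real.exp (b * t) * Real.exp (-b * t) * ‖g t‖ from by ring, h, one_mul]
  _ ≤ ‖x‖ * (C * (Real.exp (-b * t) * ‖g t‖)) := by
      have h1 : (0:ℝ) ≤ Real.exp (-b * t) * ‖g t‖ :=
        mul_nonneg (Real.exp_nonneg _) (norm_nonneg _)
      exact mul_le_mul_of_nonneg_left
        (mul_le_mul_of_nonneg_right (hC t ht) h1) (norm_nonneg x)
  _ = ‖x‖ * C * (Real.exp (-b * t) * ‖g t‖) := by ring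

lemma Lnu.integrable_smul_inner [NormedAddCommGroup H] [InnerProductSpace ℂ H]
    {b : ℝ} (g : Lnu b H) (x : H) {φ : ℝ → ℝ} (hφ : Continuous φ)
    (hφs : HasCompactSupport φ) :
    Integrable (fun t => φ t • (⟪x, g t⟫_ℂ : ℂ)) (volume : Measure ℝ) :=
  (Lnu.locallyIntegrable_inner g x).integrable_smul_left_of_hasCompactSupport hφ hφs

lemma testMem [NormedAddCommGroup H] [InnerProductSpace ℂ H] (ν : ℝ) {φ : ℝ → ℝ}
    (hφ : Continuous φ) (hφs : HasCompactSupport φ) (x : H) :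
    MemLp (fun t => φ t • x) 2 (wMeas ν) := by
  have hsm : AEStronglyMeasurable (fun t => φ t • x) (wMeas ν) :=
    (hφ.smul continuous_const).aestronglyMeasurable
  rw [memLp_two_iff_integrable_sq_norm hsm]
  unfold wMeas
  rw [integrable_withDensity_iff (wMeas_density_measurable ν)
    (Filter.Eventually.of_forall fun t => ENNReal.ofReal_lt_top)]
  have hcont : Continuous fun t => ‖φ t • x‖ ^ 2 *
      (ENNReal.ofReal (Real.exp (-2 * ν * t))).toReal := by
    simp only [ENNReal.toReal_ofReal (Real.exp_nonneg _)]
    exact ((hφ.smul continuous_const).norm.pow 2).mul (by continuity)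
  refine hcont.integrable_of_hasCompactSupport ?_
  apply HasCompactSupport.intro hφs
  intro t ht
  simp [image_eq_zero_of_notMem_tsupport ht]

open TopologicalSpace in
/-- Key lemma: an a.e. orthogonality statement holding for each element of an arbitrary set `G`
individually holds a.e. simultaneously for all of `G`, thanks to essential separability of the
ranges. -/
lemma ae_forall_inner_eq {H₀ H₁ : Type*}
    [NormedAddCommGroup H₀] [InnerProductSpace ℂ H₀] [CompleteSpace H₀]
    [NormedAddCommGroup H₁] [InnerProductSpace ℂ H₁] [CompleteSpace H₁]
    (G : Set (H₀ × H₁)) {α : Type*} {m : MeasurableSpace α} {μ : Measure α}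
    {g₁ : α → H₁} {g₂ : α → H₀}
    (hm₁ : AEStronglyMeasurable g₁ μ) (hm₂ : AEStronglyMeasurable g₂ μ)
    (h : ∀ p ∈ G, ∀ᵐ t ∂μ, (⟪p.1, g₂ t⟫_ℂ : ℂ) = ⟪p.2, g₁ t⟫_ℂ) :
    ∀ᵐ t ∂μ, ∀ p ∈ G, (⟪p.1, g₂ t⟫_ℂ : ℂ) = ⟪p.2, g₁ t⟫_ℂ := by
  obtain ⟨g₁', hg₁'m, hg₁'⟩ := hm₁
  obtain ⟨g₂', hg₂'m, hg₂'⟩ := hm₂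
  -- separable closed subspaces containing the essential ranges
  set K₀ : Submodule ℂ H₀ := (Submodule.span ℂ (Set.range g₂')).topologicalClosure with hK₀
  set K₁ : Submodule ℂ H₁ := (Submodule.span ℂ (Set.range g₁')).topologicalClosure with hK₁
  haveI : CompleteSpace K₀ := (Submodule.isClosed_topologicalClosure _).completeSpace_coe
  haveI : CompleteSpace K₁ := (Submodule.isClosed_topologicalClosure _).completeSpace_coe
  have hsep₀ : IsSeparable (K₀ : Set H₀) := by
    rw [hK₀, Submodule.topologicalClosure_coe]
    exact (hg₂'m.isSeparable_range.span).closure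
  have hsep₁ : IsSeparable (K₁ : Set H₁) := by
    rw [hK₁, Submodule.topologicalClosure_coe]
    exact (hg₁'m.isSeparable_range.span).closure
  -- the projection of the set `G`
  set Q : H₀ × H₁ → H₀ × H₁ :=
    fun p => ((Submodule.orthogonalProjectionOnto K₀ p.1 : H₀), (Submodule.orthogonalProjectionOnto K₁ p.2 : H₁)) with hQ
  have hQsep : IsSeparable (Q '' G) := by
    refine IsSeparable.mono (hsep₀.prod hsep₁) ?_
    rintro _ ⟨p, -, rfl⟩
    exact ⟨(Submodule.orthogonalProjectionOnto K₀ p.1).2, (Submodule.orthogonalProjectionOnto K₁ p.2).2⟩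
  obtain ⟨c, hcsub, hccount, hcdense⟩ := hQsep.exists_countable_dense_subset
  haveI : Countable c := hccount.to_subtype
  have hsec : ∀ y : c, ∃ p ∈ G, Q p = (y : H₀ × H₁) := fun y => by
    obtain ⟨p, hp, hQp⟩ := hcsub y.2
    exact ⟨p, hp, hQp⟩
  choose sec hsecG hsecQ using hsec
  have hae : ∀ᵐ t ∂μ, (∀ y : c, (⟪(sec y).1, g₂ t⟫_ℂ : ℂ) = ⟪(sec y).2, g₁ t⟫_ℂ)
      ∧ g₂ t ∈ (K₀ : Set H₀) ∧ g₁ t ∈ (K₁ : Set H₁) := by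
    refine ((ae_all_iff.mpr fun y : c => h _ (hsecG y)).and (Filter.Eventually.and ?_ ?_))
    · filter_upwards [hg₂'] with t ht
      rw [ht, hK₀, SetLike.mem_coe]
      exact Submodule.le_topologicalClosure _ (Submodule.subset_span (Set.mem_range_self t))
    · filter_upwards [hg₁'] with t ht
      rw [ht, hK₁, SetLike.mem_coe]
      exact Submodule.le_topologicalClosure _ (Submodule.subset_span (Set.mem_range_self t))
  filter_upwards [hae] with t ht
  obtain ⟨hD, hg₂K, hg₁K⟩ := ht
  intro p hp
  -- The continuous function `ψ` vanishing on a dense subset of `Q '' G`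
  set ψ : H₀ × H₁ → ℂ := fun v => ⟪v.1, g₂ t⟫_ℂ - ⟪v.2, g₁ t⟫_ℂ with hψ
  have hψc : Continuous ψ :=
    (continuous_fst.inner continuous_const).sub (continuous_snd.inner continuous_const)
  have hproj₀ : ∀ a : H₀, (⟪(Submodule.orthogonalProjectionOnto K₀ a : H₀), g₂ t⟫_ℂ : ℂ) = ⟪a, g₂ t⟫_ℂ := by
    intro a
    have horth := Submodule.inner_left_of_mem_orthogonal hg₂K
      (Submodule.sub_starProjection_mem_orthogonal (K := K₀) a)
    rw [inner_sub_left, sub_eq_zero] at horth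
    exact horth.symm
  have hproj₁ : ∀ a : H₁, (⟪(Submodule.orthogonalProjectionOnto K₁ a : H₁), g₁ t⟫_ℂ : ℂ) = ⟪a, g₁ t⟫_ℂ := by
    intro a
    have horth := Submodule.inner_left_of_mem_orthogonal hg₁K
      (Submodule.sub_starProjection_mem_orthogonal (K := K₁) a)
    rw [inner_sub_left, sub_eq_zero] at horth
    exact horth.symm
  have hψQ : ∀ q : H₀ × H₁, ψ (Q q) = ψ q := fun q => by
    simp only [hψ, hQ, hproj₀, hproj₁]
  have hzero : Set.EqOn ψ 0 (closure c) := by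
    refine Set.EqOn.closure (fun y hy => ?_) hψc continuous_const
    have : ψ (Q (sec ⟨y, hy⟩)) = 0 := by
      rw [hψQ, hψ]
      simpa [sub_eq_zero] using hD ⟨y, hy⟩
    rw [hsecQ ⟨y, hy⟩] at this
    simpa using this
  have hQp : ψ (Q p) = 0 := hzero (hcdense ⟨p, hp, rfl⟩)
  rw [hψQ] at hQp
  simpa [hψ, sub_eq_zero] using hQp

lemma real_smul_inner {H : Type*} [NormedAddCommGroup H] [InnerProductSpace ℂ H]
    (r : ℝ) (v w : H) : (⟪r • v, w⟫_ℂ : ℂ) = r • ⟪v, w⟫_ℂ := by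
  rw [show r • v = (r : ℂ) • v from by rw [← Complex.coe_algebraMap, algebraMap_smul]]
  exact inner_smul_real_left v w r


end Helpers

/-- For a densely defined closed linear operator `A : dom(A) ⊆ H₀ → H₁` between
Hilbert spaces and `ν ∈ ℝ`, the ν-adjoint of the pointwise lift `A_{L²_ν}` equals the pointwise
lift of the Hilbert space adjoint `A*` to `L²_{−ν}`. -/
theorem statement8 (ν : ℝ) (H₀ H₁ : Type*)
    [NormedAddCommGroup H₀] [InnerProductSpace ℂ H₀] [CompleteSpace H₀]
    [NormedAddCommGroup H₁] [InnerProductSpace ℂ H₁] [CompleteSpace H₁]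
    (A : H₀ →ₗ.[ℂ] H₁) (hdense : Dense (A.domain : Set H₀))
    (hclosed : IsClosed (A.graph : Set (H₀ × H₁))) :
    dualRel ν (-ν) (liftRel ν A) = liftRel (-ν) A.adjoint := by
  ext g
  obtain ⟨g₁, g₂⟩ := g
  constructor
  · intro hg
    -- hard direction
    have step1 : ∀ x : A.domain, ∀ᵐ t : ℝ, (⟪(x : H₀), g₂ t⟫_ℂ : ℂ) = ⟪A x, g₁ t⟫_ℂ := by
      intro x
      have hloc : LocallyIntegrable
          (fun t => (⟪(x : H₀), g₂ t⟫_ℂ : ℂ) - ⟪A x, g₁ t⟫_ℂ) volume :=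
        (Lnu.locallyIntegrable_inner g₂ (x : H₀)).sub (Lnu.locallyIntegrable_inner g₁ (A x))
      have key := ae_eq_zero_of_integral_contDiff_smul_eq_zero hloc ?_
      · filter_upwards [key] with t ht
        rwa [sub_eq_zero] at ht
      intro φ hφ hφs
      have hφc : Continuous φ := hφ.continuous
      have hm1 : MemLp (fun t => φ t • (x : H₀)) 2 (wMeas ν) := testMem ν hφc hφs _
      have hm2 : MemLp (fun t => φ t • (A x : H₁)) 2 (wMeas ν) := testMem ν hφc hφs _
      have hmem : (hm1.toLp _, hm2.toLp _) ∈ liftRel ν A := by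
        have h1 := wMeas_ae_iff.mp hm1.coeFn_toLp
        have h2 := wMeas_ae_iff.mp hm2.coeFn_toLp
        filter_upwards [h1, h2] with t ht1 ht2
        simp only [ht1, ht2]
        have hd : φ t • (x : H₀) ∈ A.domain := by
          rw [show φ t • (x : H₀) = ((φ t : ℂ)) • (x : H₀) from by
            rw [← Complex.coe_algebraMap, algebraMap_smul]]
          exact A.domain.smul_mem _ x.2
        refine ⟨hd, ?_⟩
        have heq : (⟨φ t • (x : H₀), hd⟩ : A.domain) = ((φ t : ℂ)) • x := by
          apply Subtype.ext
          simp only [Submodule.coe_smul]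
          rw [← Complex.coe_algebraMap, algebraMap_smul]
        rw [heq, A.map_smul]
        rw [← Complex.coe_algebraMap, algebraMap_smul]
      have hpair := hg _ hmem
      unfold nuPair at hpair
      simp only at hpair
      have e1 : (∫ t : ℝ, (⟪(hm1.toLp _) t, g₂ t⟫_ℂ : ℂ))
          = ∫ t : ℝ, φ t • (⟪(x : H₀), g₂ t⟫_ℂ : ℂ) := by
        refine integral_congr_ae ?_
        filter_upwards [wMeas_ae_iff.mp hm1.coeFn_toLp] with t ht
        rw [ht, real_smul_inner]
      have e2 : (∫ t : ℝ, (⟪(hm2.toLp _) t, g₁ t⟫_ℂ : ℂ))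
          = ∫ t : ℝ, φ t • (⟪(A x : H₁), g₁ t⟫_ℂ : ℂ) := by
        refine integral_congr_ae ?_
        filter_upwards [wMeas_ae_iff.mp hm2.coeFn_toLp] with t ht
        rw [ht, real_smul_inner]
      rw [e1, e2] at hpair
      have hi1 := Lnu.integrable_smul_inner g₂ (x : H₀) hφc hφs
      have hi2 := Lnu.integrable_smul_inner g₁ (A x) hφc hφs
      calc (∫ t : ℝ, φ t • ((⟪(x : H₀), g₂ t⟫_ℂ : ℂ) - ⟪A x, g₁ t⟫_ℂ))
          = ∫ t : ℝ, (φ t • (⟪(x : H₀), g₂ t⟫_ℂ : ℂ) - φ t • (⟪A x, g₁ t⟫_ℂ : ℂ)) := by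
            simp only [smul_sub]
        _ = (∫ t : ℝ, φ t • (⟪(x : H₀), g₂ t⟫_ℂ : ℂ))
            - ∫ t : ℝ, φ t • (⟪A x, g₁ t⟫_ℂ : ℂ) := integral_sub hi1 hi2
        _ = 0 := by rw [hpair, sub_self]
    -- step b : simultaneity
    have hae := ae_forall_inner_eq
      {p : H₀ × H₁ | ∃ h : p.1 ∈ A.domain, p.2 = A ⟨p.1, h⟩}
      (Lnu.aesm_vol g₁) (Lnu.aesm_vol g₂) ?_
    · show ∀ᵐ t : ℝ, _
      filter_upwards [hae] with t ht
      have hx : ∀ x : A.domain, (⟪(x : H₀), g₂ t⟫_ℂ : ℂ) = ⟪A x, g₁ t⟫_ℂ := by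
        intro x
        exact ht ((x : H₀), A x) ⟨x.2, by cases x; rfl⟩
      have hmemD : g₁ t ∈ A.adjoint.domain := by
        refine LinearPMap.mem_adjoint_domain_of_exists _ ⟨g₂ t, fun x => ?_⟩
        rw [← inner_conj_symm, hx x, inner_conj_symm]
      refine ⟨hmemD, ?_⟩
      refine (LinearPMap.adjoint_apply_eq hdense ⟨g₁ t, hmemD⟩ (fun x => ?_)).symm
      rw [← inner_conj_symm, hx x, inner_conj_symm]
    · rintro p ⟨hp, hp2⟩
      have := step1 ⟨p.1, hp⟩
      filter_upwards [this] with t ht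
      rw [hp2]
      exact ht
  · -- easy direction
    intro hg f hf
    unfold nuPair
    refine integral_congr_ae ?_
    filter_upwards [hg, hf] with t ht hf'
    obtain ⟨h1, h2⟩ := ht
    obtain ⟨h3, h4⟩ := hf'
    rw [h2, h4]
    have := (LinearPMap.adjoint_isFormalAdjoint hdense) ⟨g₁ t, h1⟩ ⟨f.1 t, h3⟩
    rw [← inner_conj_symm, this, inner_conj_symm]
end

section
/- Let H, H₀ be Hilbert spaces, M : dom(M) ⊆ ℂ → ℒ(H) a material law satisfying Re⟨h, zM(z)h⟩ ≥ c‖h‖²_H for all h ∈ H and Re z ≥ ν₀ (for some c > 0 and ν₀ > max(s_b(M),0)), A : dom(A) ⊆ H → H skew-selfadjoint, ν ≥ ν₀, B ∈ ℒ(H₀,H) lifted pointwise to ℒ(L²_ν(ℝ,H₀), L²_ν(ℝ,H)), S_ν the solution operator of the evolutionary equation, and T > 0. Then the following are equivalent: (i) the controlled evolutionary equation is null-controllable in time T, i.e., for all F ∈ L²_ν(ℝ,H) there exists G ∈ L²_ν(ℝ,H₀) with supp S_ν(F + BG) ⊆ (−∞,T]; (ii) ran(r_{≥T,ν} S_ν)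 ⊆ ran(r_{≥T,ν} S_ν B); (iii) there exists c' ≥ 0 such that ‖(r_{≥T,ν} S_ν)^{*_ν} F‖_{L²_{−ν}} ≤ c' ‖(r_{≥T,ν} S_ν B)^{*_ν} F‖_{L²_{−ν}} for all F ∈ L²_{−ν}(ℝ,H); (iv) there exists c' ≥ 0 such that ‖S_ν^{*_ν} 1_{≥T,−ν} F‖_{L²_{−ν}} ≤ c' ‖B^{*_ν} S_ν^{*_ν} 1_{≥T,−ν} F‖_{L²_{−ν}} for all F ∈ L²_{−ν}([T,∞),H). -/
open MeasureTheory Complex Real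
open scoped ENNReal InnerProductSpace ComplexInnerProductSpace

section

variable {H : Type*} [NormedAddCommGroup H] [InnerProductSpace ℂ H] [CompleteSpace H]

/-- The evolutionary relation `∂_{t,μ} M(∂_{t,μ}) + A` at weight `μ`, where `L` is the
Fourier–Laplace transform on `L²_μ(ℝ,H)` and `M(∂_{t,μ}) = L* M(im+μ) L`. -/
def evoRel (μ : ℝ) (M : ℂ → (H →L[ℂ] H)) (A : H →ₗ.[ℂ] H)
    (L : Lnu μ H ≃ₗᵢ[ℂ] Lp H 2 (volume : Measure ℝ)) : Set (Lnu μ H × Lnu μ H) :=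
  {p | ∃ h g₁ g₂ : Lnu μ H,
    (∀ᵐ t : ℝ, (L h) t = M (Complex.I * t + μ) ((L p.1) t)) ∧
    (h, g₁) ∈ derivRel μ H ∧ (p.1, g₂) ∈ liftRel μ A ∧ p.2 = g₁ + g₂}

end

set_option linter.unusedSectionVars false
set_option maxHeartbeats 1000000

section Douglas
open ContinuousLinearMap Filter Topology


variable {Y Z W : Type*} [NormedAddCommGroup Y] [InnerProductSpace ℂ Y] [CompleteSpace Y]
    [NormedAddCommGroup Z] [InnerProductSpace ℂ Z] [CompleteSpace Z]
    [NormedAddCommGroup W] [InnerProductSpace ℂ W] [CompleteSpace W]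

theorem douglas (T₁ : Y →L[ℂ] W) (T₂ : Z →L[ℂ] W) :
    Set.range T₁ ⊆ Set.range T₂ ↔
      ∃ c : ℝ, 0 ≤ c ∧ ∀ w : W,
        ‖ContinuousLinearMap.adjoint T₁ w‖ ≤ c * ‖ContinuousLinearMap.adjoint T₂ w‖ := by
  constructor
  · intro hsub
    set K : Submodule ℂ Z := LinearMap.ker (T₂ : Z →ₗ[ℂ] W) with hK
    have hKc : IsClosed (K : Set Z) := ContinuousLinearMap.isClosed_ker T₂
    haveI : CompleteSpace K := hKc.completeSpace_coe
    have uniq : ∀ u u' : Z, u ∈ Kᗮ → u' ∈ Kᗮ → T₂ u = T₂ u' → u = u' := by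
      intro u u' hu hu' huu
      have h1 : u - u' ∈ K := by
        simp only [hK, LinearMap.mem_ker, ContinuousLinearMap.coe_coe, _root_.map_sub, huu, sub_self]
      have h2 : u - u' ∈ Kᗮ := Submodule.sub_mem _ hu hu'
      have h3 := (Submodule.orthogonal_disjoint K).le_bot ⟨h1, h2⟩
      rw [Submodule.mem_bot] at h3
      exact sub_eq_zero.mp h3
    -- the candidate preimage map
    have hex : ∀ y : Y, ∃ z : Z, z ∈ Kᗮ ∧ T₂ z = T₁ y := by
      intro y
      obtain ⟨z, hz⟩ := hsub ⟨y, rfl⟩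
      refine ⟨z - (K.orthogonalProjectionOnto z : Z), K.sub_starProjection_mem_orthogonal z, ?_⟩
      have : T₂ (K.orthogonalProjectionOnto z : Z) = 0 :=
        LinearMap.mem_ker.mp (K.orthogonalProjectionOnto z).2
      rw [_root_.map_sub, this, sub_zero, hz]
    choose Cf hCmem hCeq using hex
    have Cadd : ∀ y y', Cf (y + y') = Cf y + Cf y' := by
      intro y y'
      refine uniq _ _ (hCmem _) (Submodule.add_mem _ (hCmem y) (hCmem y')) ?_
      rw [hCeq, _root_.map_add, _root_.map_add, hCeq, hCeq]
    have Csmul : ∀ (a : ℂ) y, Cf (a • y) = a • Cf y := by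
      intro a y
      refine uniq _ _ (hCmem _) (Submodule.smul_mem _ a (hCmem y)) ?_
      rw [hCeq, _root_.map_smul, _root_.map_smul, hCeq]
    let Cl : Y →ₗ[ℂ] Z := { toFun := Cf, map_add' := Cadd, map_smul' := Csmul }
    have hcont : Continuous Cl := by
      apply Cl.continuous_of_seq_closed_graph
      intro u x y hux huy
      show y = Cf x
      refine uniq _ _ ?_ (hCmem x) ?_
      · have hmem : ∀ n, (Cl ∘ u) n ∈ Kᗮ := fun n => hCmem (u n)
        exact (Submodule.isClosed_orthogonal K).mem_of_tendsto huy (Eventually.of_forall hmem)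
      · have h1 : Tendsto (fun n => T₂ ((Cl ∘ u) n)) atTop (𝓝 (T₂ y)) :=
          (T₂.continuous.tendsto _).comp huy
        have h2 : (fun n => T₂ ((Cl ∘ u) n)) = fun n => T₁ (u n) := by
          funext n; exact hCeq (u n)
        have h3 : Tendsto (fun n => T₁ (u n)) atTop (𝓝 (T₁ x)) :=
          (T₁.continuous.tendsto _).comp hux
        rw [h2] at h1
        rw [hCeq]
        exact tendsto_nhds_unique h1 h3
    let C : Y →L[ℂ] Z := ⟨Cl, hcont⟩
    have hfact : T₁ = T₂ ∘L C := by
      ext y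
      exact (hCeq y).symm
    refine ⟨‖ContinuousLinearMap.adjoint C‖, norm_nonneg _, fun w => ?_⟩
    have : ContinuousLinearMap.adjoint T₁ w
        = ContinuousLinearMap.adjoint C (ContinuousLinearMap.adjoint T₂ w) := by
      rw [hfact, adjoint_comp]; rfl
    rw [this]
    exact (ContinuousLinearMap.adjoint C).le_opNorm _
  · rintro ⟨c, hc, hineq⟩
    rintro _ ⟨x, rfl⟩
    set A := ContinuousLinearMap.adjoint T₂ with hA
    set B := ContinuousLinearMap.adjoint T₁ with hB
    set V : Submodule ℂ Z := LinearMap.range (A : W →ₗ[ℂ] Z) with hV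
    have wd : ∀ w w' : W, A w = A w' → B w = B w' := by
      intro w w' h
      have : ‖B w - B w'‖ ≤ c * ‖A w - A w'‖ := by
        rw [← _root_.map_sub, ← _root_.map_sub]; exact hineq _
      rw [h, sub_self, norm_zero, mul_zero] at this
      exact sub_eq_zero.mp (norm_le_zero_iff.mp this)
    -- bounded linear functional on V
    have hpsi_wd : ∀ (v : V) (w : W), A w = (v : Z) → ∀ w', A w' = (v : Z) →
        (⟪x, B w⟫_ℂ) = ⟪x, B w'⟫_ℂ := by
      intro v w hw w' hw'
      rw [wd w w' (by rw [hw, hw'])]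
    let psif : V → ℂ := fun v => ⟪x, B (Classical.choose v.2)⟫_ℂ
    have hpsif : ∀ (v : V) (w : W), A w = (v : Z) → psif v = ⟪x, B w⟫_ℂ := by
      intro v w hw
      exact hpsi_wd v _ (Classical.choose_spec v.2) w hw
    have psif_add : ∀ v v' : V, psif (v + v') = psif v + psif v' := by
      intro v v'
      obtain ⟨w, hw : A w = v⟩ := v.2
      obtain ⟨w', hw' : A w' = v'⟩ := v'.2
      rw [hpsif v w hw, hpsif v' w' hw', hpsif (v + v') (w + w') (by
        rw [_root_.map_add, hw, hw']; rfl), _root_.map_add, inner_add_right]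
    have psif_smul : ∀ (a : ℂ) (v : V), psif (a • v) = a • psif v := by
      intro a v
      obtain ⟨w, hw : A w = v⟩ := v.2
      rw [hpsif v w hw, hpsif (a • v) (a • w) (by rw [_root_.map_smul, hw]; rfl), _root_.map_smul,
        inner_smul_right]
      rfl
    let psil : V →ₗ[ℂ] ℂ := { toFun := psif, map_add' := psif_add, map_smul' := psif_smul }
    have psil_bound : ∀ v : V, ‖psil v‖ ≤ (c * ‖x‖) * ‖v‖ := by
      intro v
      obtain ⟨w, hw : A w = v⟩ := v.2
      have h1 : psil v = ⟪x, B w⟫_ℂ := hpsif v w hw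
      rw [h1]
      calc ‖(⟪x, B w⟫_ℂ)‖ ≤ ‖x‖ * ‖B w‖ := norm_inner_le_norm _ _
        _ ≤ ‖x‖ * (c * ‖A w‖) := by
            refine mul_le_mul_of_nonneg_left (hineq w) (norm_nonneg _)
        _ = (c * ‖x‖) * ‖v‖ := by
            have : ‖(v : Z)‖ = ‖A w‖ := by rw [hw]
            rw [Submodule.norm_coe] at this
            rw [this]; ring
    let psi : V →L[ℂ] ℂ := psil.mkContinuous _ psil_bound
    obtain ⟨g, hg, -⟩ := exists_extension_norm_eq V psi
    set y : Z := (InnerProductSpace.toDual ℂ Z).symm g with hy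
    have hyg : ∀ z : Z, (⟪y, z⟫_ℂ) = g z := by
      intro z
      rw [hy]
      exact InnerProductSpace.toDual_symm_apply
    refine ⟨y, ?_⟩
    have key : ∀ w : W, (⟪T₂ y, w⟫_ℂ) = ⟪T₁ x, w⟫_ℂ := by
      intro w
      have h1 : (⟪T₂ y, w⟫_ℂ) = ⟪y, A w⟫_ℂ := by
        rw [hA, ContinuousLinearMap.adjoint_inner_right]
      have h2 : (⟪y, A w⟫_ℂ) = g (A w) := hyg (A w)
      have h3 : g (A w) = psi ⟨A w, LinearMap.mem_range_self (A : W →ₗ[ℂ] Z) w⟩ := hg ⟨A w, LinearMap.mem_range_self (A : W →ₗ[ℂ] Z) w⟩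
      have h4 : psi ⟨A w, LinearMap.mem_range_self (A : W →ₗ[ℂ] Z) w⟩ = ⟪x, B w⟫_ℂ :=
        hpsif ⟨A w, LinearMap.mem_range_self (A : W →ₗ[ℂ] Z) w⟩ w rfl
      have h5 : (⟪x, B w⟫_ℂ) = ⟪T₁ x, w⟫_ℂ := by
        rw [hB, ContinuousLinearMap.adjoint_inner_right]
      rw [h1, h2, h3, h4, h5]
    have : ∀ w : W, (⟪T₂ y - T₁ x, w⟫_ℂ) = 0 := by
      intro w
      rw [inner_sub_left, key, sub_self]
    have h0 := this (T₂ y - T₁ x)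
    rw [inner_self_eq_zero] at h0
    exact sub_eq_zero.mp h0

end Douglas

noncomputable section
namespace S19aux


variable {H : Type*} [NormedAddCommGroup H] [InnerProductSpace ℂ H]

lemma meas_density (a : ℝ) : Measurable (fun t : ℝ => ENNReal.ofReal (Real.exp (-2 * a * t))) :=
  (Real.continuous_exp.comp (continuous_const.mul continuous_id)).measurable.ennreal_ofReal

lemma wMeas_ac (a : ℝ) : wMeas a ≪ (volume : Measure ℝ) :=
  withDensity_absolutelyContinuous _ _

lemma volume_ac (a : ℝ) : (volume : Measure ℝ) ≪ wMeas a :=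
  withDensity_absolutelyContinuous' (meas_density a).aemeasurable
    (Filter.Eventually.of_forall fun t => by
      simp [ENNReal.ofReal_eq_zero, not_le, Real.exp_pos])

lemma ae_wMeas_of_ae {a : ℝ} {p : ℝ → Prop} (h : ∀ᵐ t : ℝ, p t) : ∀ᵐ t ∂(wMeas a), p t :=
  (wMeas_ac a).ae_le h

lemma ae_of_ae_wMeas {a : ℝ} {p : ℝ → Prop} (h : ∀ᵐ t ∂(wMeas a), p t) : ∀ᵐ t : ℝ, p t :=
  (volume_ac a).ae_le h

lemma eLpNorm_wMeas (a b : ℝ) (g : ℝ → H) :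
    eLpNorm (fun t => Real.exp ((b - a) * t) • g t) 2 (wMeas b) = eLpNorm g 2 (wMeas a) := by
  rw [eLpNorm_eq_lintegral_rpow_enorm_toReal two_ne_zero ENNReal.ofNat_ne_top,
      eLpNorm_eq_lintegral_rpow_enorm_toReal two_ne_zero ENNReal.ofNat_ne_top]
  congr 1
  rw [wMeas, wMeas,
    lintegral_withDensity_eq_lintegral_mul_non_measurable _ (meas_density b)
      (Filter.Eventually.of_forall fun t => ENNReal.ofReal_lt_top),
    lintegral_withDensity_eq_lintegral_mul_non_measurable _ (meas_density a)
      (Filter.Eventually.of_forall fun t => ENNReal.ofReal_lt_top)]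
  apply lintegral_congr
  intro t
  have h2 : ((2 : ℝ≥0∞).toReal) = (2 : ℝ) := by simp
  simp only [Pi.mul_apply, h2, ← ofReal_norm]
  rw [norm_smul, Real.norm_eq_abs, Real.abs_exp]
  rw [ENNReal.ofReal_rpow_of_nonneg (by positivity) (by norm_num),
    ENNReal.ofReal_rpow_of_nonneg (norm_nonneg _) (by norm_num),
    ← ENNReal.ofReal_mul (by positivity), ← ENNReal.ofReal_mul (by positivity)]
  congr 1
  rw [Real.mul_rpow (Real.exp_pos _).le (norm_nonneg _), ← Real.exp_mul, ← mul_assoc,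
    ← Real.exp_add]
  ring_nf


lemma memLp_expMul (a b : ℝ) (f : Lnu a H) :
    MemLp (fun t => Real.exp ((b - a) * t) • (f : ℝ → H) t) 2 (wMeas b) := by
  constructor
  · have hf : AEStronglyMeasurable (f : ℝ → H) (wMeas b) :=
      (Lp.aestronglyMeasurable f).mono_ac ((wMeas_ac b).trans (volume_ac a))
    exact ((Real.continuous_exp.comp (continuous_const.mul continuous_id)).aestronglyMeasurable).smul hf
  · rw [eLpNorm_wMeas a b]
    exact (Lp.memLp f).2

/-- Multiplication by `e^{(b-a)t}`, as a map `L²_a → L²_b`. -/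
def expMul (a b : ℝ) : Lnu a H →L[ℂ] Lnu b H := by
  refine LinearMap.mkContinuous
    { toFun := fun f => (memLp_expMul a b f).toLp _
      map_add' := ?_
      map_smul' := ?_ } 1 ?_
  · intro f g
    rw [← MemLp.toLp_add (memLp_expMul a b f) (memLp_expMul a b g)]
    refine MemLp.toLp_congr (memLp_expMul a b (f + g))
      ((memLp_expMul a b f).add (memLp_expMul a b g)) ?_
    have h1 : ((f + g : Lnu a H) : ℝ → H) =ᵐ[wMeas a] (f : ℝ → H) + (g : ℝ → H) :=
      Lp.coeFn_add f g
    filter_upwards [ae_wMeas_of_ae (a := b) (ae_of_ae_wMeas h1)] with t ht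
    simp only [Pi.add_apply]
    rw [ht, Pi.add_apply, smul_add]
  · intro c f
    simp only [RingHom.id_apply]
    rw [← MemLp.toLp_const_smul c (memLp_expMul a b f)]
    refine MemLp.toLp_congr (memLp_expMul a b (c • f))
      ((memLp_expMul a b f).const_smul c) ?_
    have h1 : ((c • f : Lnu a H) : ℝ → H) =ᵐ[wMeas a] c • (f : ℝ → H) :=
      Lp.coeFn_smul c f
    filter_upwards [ae_wMeas_of_ae (a := b) (ae_of_ae_wMeas h1)] with t ht
    simp only [Pi.smul_apply]
    rw [ht, Pi.smul_apply, smul_comm]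
  · intro f
    simp only [LinearMap.coe_mk, AddHom.coe_mk, one_mul]
    rw [Lp.norm_def, Lp.norm_def, eLpNorm_congr_ae (MemLp.coeFn_toLp (memLp_expMul a b f)),
      eLpNorm_wMeas a b]

lemma coeFn_expMul (a b : ℝ) (f : Lnu a H) :
    ∀ᵐ t : ℝ, (expMul a b f : ℝ → H) t = Real.exp ((b - a) * t) • (f : ℝ → H) t :=
  ae_of_ae_wMeas (MemLp.coeFn_toLp (memLp_expMul a b f))

lemma expMul_expMul (a b : ℝ) (f : Lnu a H) : expMul b a (expMul a b f) = f := by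
  apply Lp.ext
  filter_upwards [ae_wMeas_of_ae (a := a) (coeFn_expMul b a (expMul a b f)),
    ae_wMeas_of_ae (a := a) (coeFn_expMul a b f)] with t h1 h2
  rw [h1, h2, smul_smul, ← Real.exp_add]
  have : (a - b) * t + (b - a) * t = 0 := by ring
  rw [this, Real.exp_zero, one_smul]

/-- Truncation to `[T,∞)` on `L²_a`. -/
lemma memLp_trunc (a T : ℝ) (f : Lnu a H) :
    MemLp (fun t => if T ≤ t then (f : ℝ → H) t else 0) 2 (wMeas a) := by
  have : (fun t => if T ≤ t then (f : ℝ → H) t else 0)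
      = Set.indicator {t : ℝ | T ≤ t} (f : ℝ → H) := by
    funext t; by_cases h : T ≤ t <;> simp [Set.indicator, h]
  rw [this]
  exact MemLp.indicator (measurableSet_le measurable_const measurable_id) (Lp.memLp f)

def trunc (a T : ℝ) : Lnu a H →L[ℂ] Lnu a H := by
  have hm := fun f : Lnu a H => memLp_trunc a T f
  refine LinearMap.mkContinuous
    { toFun := fun f => (hm f).toLp _
      map_add' := ?_
      map_smul' := ?_ } 1 ?_
  · intro f g
    rw [← MemLp.toLp_add (hm f) (hm g)]
    refine MemLp.toLp_congr (hm (f + g)) ((hm f).add (hm g)) ?_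
    filter_upwards [Lp.coeFn_add f g] with t ht
    simp only [Pi.add_apply]
    by_cases h : T ≤ t
    · simp only [h, if_true]; rw [ht, Pi.add_apply]
    · simp [h]
  · intro c f
    simp only [RingHom.id_apply]
    rw [← MemLp.toLp_const_smul c (hm f)]
    refine MemLp.toLp_congr (hm (c • f)) ((hm f).const_smul c) ?_
    filter_upwards [Lp.coeFn_smul c f] with t ht
    simp only [Pi.smul_apply]
    by_cases h : T ≤ t
    · simp only [h, if_true]; rw [ht, Pi.smul_apply]
    · simp [h]
  · intro f
    simp only [LinearMap.coe_mk, AddHom.coe_mk, one_mul]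
    rw [Lp.norm_def, Lp.norm_def, eLpNorm_congr_ae (MemLp.coeFn_toLp (hm f))]
    apply ENNReal.toReal_mono (Lp.eLpNorm_ne_top f)
    refine eLpNorm_mono_ae (Filter.Eventually.of_forall fun t => ?_)
    by_cases h : T ≤ t <;> simp [h]

lemma coeFn_trunc (a T : ℝ) (f : Lnu a H) :
    ∀ᵐ t : ℝ, (trunc a T f : ℝ → H) t = if T ≤ t then (f : ℝ → H) t else 0 :=
  ae_of_ae_wMeas (MemLp.coeFn_toLp (memLp_trunc a T f))


variable [CompleteSpace H]

lemma Lnu_inner (a : ℝ) (f g : Lnu a H) :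
    (inner ℂ f g : ℂ) = ∫ t : ℝ, Real.exp (-2 * a * t) • (⟪(f : ℝ → H) t, (g : ℝ → H) t⟫_ℂ) := by
  rw [L2.inner_def]
  have hmm : wMeas a
      = volume.withDensity (fun t => (Real.toNNReal (Real.exp (-2 * a * t)) : ℝ≥0∞)) :=
    rfl
  have key : ∀ φ : ℝ → ℂ, ∫ t, φ t ∂(wMeas a) = ∫ t : ℝ, Real.exp (-2 * a * t) • φ t := by
    intro φ
    have hme : Measurable fun t : ℝ => (Real.exp (-2 * a * t)).toNNReal :=
      ((Real.continuous_exp.comp (continuous_const.mul continuous_id)).measurable).real_toNNReal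
    rw [hmm, integral_withDensity_eq_integral_smul hme φ]
    congr 1
    funext t
    rw [NNReal.smul_def, Real.coe_toNNReal _ (Real.exp_pos _).le]
  exact key _

lemma nuPair_eq_inner (ν : ℝ) (f : Lnu ν H) (g : Lnu (-ν) H) :
    nuPair f g = (inner ℂ (expMul ν (-ν) f) g : ℂ) := by
  rw [Lnu_inner, nuPair]
  refine integral_congr_ae ?_
  filter_upwards [coeFn_expMul ν (-ν) f] with t ht
  rw [ht]
  rw [show Real.exp ((-ν - ν) * t) • ((f : ℝ → H) t)
      = ((Real.exp ((-ν - ν) * t) : ℝ) : ℂ) • ((f : ℝ → H) t) from (Complex.coe_smul _ _).symm]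
  rw [inner_smul_left, Complex.conj_ofReal, Complex.real_smul,
    ← mul_assoc, ← Complex.ofReal_mul, ← Real.exp_add]
  have harg : -2 * -ν * t + (-ν - ν) * t = 0 := by ring
  rw [harg, Real.exp_zero, Complex.ofReal_one, one_mul]

lemma nuPair_left_cancel (ν : ℝ) (u v : Lnu (-ν) H)
    (h : ∀ f : Lnu ν H, nuPair f u = nuPair f v) : u = v := by
  refine ext_inner_left ℂ fun w => ?_
  have h1 := h (expMul (-ν) ν w)
  rwa [nuPair_eq_inner, nuPair_eq_inner, expMul_expMul] at h1

lemma nuPair_trunc (ν Tc : ℝ) (u : Lnu ν H) (v : Lnu (-ν) H) :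
    nuPair (trunc ν Tc u) v = nuPair u (trunc (-ν) Tc v) := by
  refine integral_congr_ae ?_
  filter_upwards [coeFn_trunc ν Tc u, coeFn_trunc (-ν) Tc v] with t h1 h2
  rw [h1, h2]
  by_cases h : Tc ≤ t
  · simp [h]
  · simp [h]

end S19aux
end

/-- Null-controllability of the controlled evolutionary equation
`(∂_t M(∂_t) + A)U = F + BG` in time `T` is equivalent to the range inclusion
`ran(r_{≥T,ν} S_ν) ⊆ ran(r_{≥T,ν} S_ν B)`, and to the corresponding observability-type
inequalities for the ν-adjoint operators. -/
theorem statement19 (H H₀ : Type*)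
    [NormedAddCommGroup H] [InnerProductSpace ℂ H] [CompleteSpace H]
    [NormedAddCommGroup H₀] [InnerProductSpace ℂ H₀] [CompleteSpace H₀]
    -- the material law `M`, holomorphic on its open domain `Md`
    (Md : Set ℂ) (M : ℂ → (H →L[ℂ] H)) (hMd : IsOpen Md) (hhol : DifferentiableOn ℂ M Md)
    (c : ℝ) (hc : 0 < c) (ν₀ : ℝ) (hν₀ : 0 < ν₀)
    (hsb : ∃ ν' < ν₀, {z : ℂ | ν' ≤ z.re} ⊆ Md ∧ ∃ C : ℝ, ∀ z ∈ {z : ℂ | ν' ≤ z.re}, ‖M z‖ ≤ C)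
    (hpos : ∀ (h : H) (z : ℂ), ν₀ ≤ z.re → c * ‖h‖ ^ 2 ≤ (⟪h, z • (M z) h⟫_ℂ).re)
    -- the skew-selfadjoint spatial operator `A`
    (A : H →ₗ.[ℂ] H) (hAdense : Dense (A.domain : Set H)) (hskew : A.adjoint = -A)
    (ν : ℝ) (hν : ν₀ ≤ ν)
    -- `F` is the unitary Fourier transform on `L²(ℝ,H)`
    (Fou : Lp H 2 (volume : Measure ℝ) ≃ₗᵢ[ℂ] Lp H 2 (volume : Measure ℝ))
    (hFou : ∀ f : Lp H 2 (volume : Measure ℝ), Integrable (f : ℝ → H) volume →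
      ∀ᵐ ξ : ℝ, Fou f ξ = (Real.sqrt (2 * π))⁻¹ •
        ∫ t : ℝ, Complex.exp (-(Complex.I * t * ξ)) • f t)
    (Eν : Lnu ν H ≃ₗᵢ[ℂ] Lp H 2 (volume : Measure ℝ))
    (hEν : ∀ f : Lnu ν H, ∀ᵐ t : ℝ, Eν f t = Real.exp (-ν * t) • f t)
    -- `S` is Picard's solution operator `S_ν`
    (S : Lnu ν H →L[ℂ] Lnu ν H)
    (hS : ∀ f g : Lnu ν H, (g, f) ∈ closure (evoRel ν M A (Eν.trans Fou)) ↔ g = S f)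
    -- the control operator `B`, lifted pointwise to `Bop`
    (B : H₀ →L[ℂ] H) (Bop : Lnu ν H₀ →L[ℂ] Lnu ν H)
    (hBop : ∀ g : Lnu ν H₀, ∀ᵐ t : ℝ, Bop g t = B (g t))
    -- the time horizon and the restriction map `r_{≥T,ν}` (truncation to `[T,∞)`)
    (T : ℝ) (hT : 0 < T)
    (R : Lnu ν H →L[ℂ] Lnu ν H)
    (hR : ∀ f : Lnu ν H, ∀ᵐ t : ℝ, R f t = if T ≤ t then f t else 0)
    -- the ν-adjoints `S^{*_ν}`, `B^{*_ν}`, `(r_{≥T,ν}S)^{*_ν}`, `(r_{≥T,ν}SB)^{*_ν}`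
    (Sd : Lnu (-ν) H →L[ℂ] Lnu (-ν) H)
    (hSd : ∀ (f : Lnu ν H) (g : Lnu (-ν) H), nuPair (S f) g = nuPair f (Sd g))
    (Bd : Lnu (-ν) H →L[ℂ] Lnu (-ν) H₀)
    (hBd : ∀ (f : Lnu ν H₀) (g : Lnu (-ν) H), nuPair (Bop f) g = nuPair f (Bd g))
    (RSd : Lnu (-ν) H →L[ℂ] Lnu (-ν) H)
    (hRSd : ∀ (f : Lnu ν H) (g : Lnu (-ν) H), nuPair (R (S f)) g = nuPair f (RSd g))
    (RSBd : Lnu (-ν) H →L[ℂ] Lnu (-ν) H₀)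
    (hRSBd : ∀ (f : Lnu ν H₀) (g : Lnu (-ν) H), nuPair (R (S (Bop f))) g = nuPair f (RSBd g)) :
    -- (i) ⇔ (ii)
    ((∀ f : Lnu ν H, ∃ G : Lnu ν H₀, ∀ᵐ t : ℝ, T < t → S (f + Bop G) t = 0) ↔
      Set.range (fun f : Lnu ν H => R (S f)) ⊆
        Set.range (fun g : Lnu ν H₀ => R (S (Bop g)))) ∧
    -- (ii) ⇔ (iii)
    ((Set.range (fun f : Lnu ν H => R (S f)) ⊆
        Set.range (fun g : Lnu ν H₀ => R (S (Bop g)))) ↔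
      ∃ c' : ℝ, 0 ≤ c' ∧ ∀ f : Lnu (-ν) H, ‖RSd f‖ ≤ c' * ‖RSBd f‖) ∧
    -- (iii) ⇔ (iv)
    ((∃ c' : ℝ, 0 ≤ c' ∧ ∀ f : Lnu (-ν) H, ‖RSd f‖ ≤ c' * ‖RSBd f‖) ↔
      ∃ c' : ℝ, 0 ≤ c' ∧ ∀ f : Lnu (-ν) H, (∀ᵐ t : ℝ, t < T → f t = 0) →
        ‖Sd f‖ ≤ c' * ‖Bd (Sd f)‖) := by
  classical
  have hne : ∀ᵐ t : ℝ, t ≠ T := by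
    rw [ae_iff]
    simp only [ne_eq, not_not, Set.setOf_eq_eq_singleton]
    exact Real.volume_singleton
  -- identities for the ν-adjoints in terms of truncation
  have hRtr : ∀ u : Lnu ν H, R u = S19aux.trunc ν T u := by
    intro u
    apply Lp.ext
    apply S19aux.ae_wMeas_of_ae
    filter_upwards [hR u, S19aux.coeFn_trunc ν T u] with t h1 h2
    rw [h1, h2]
  have hRSd_eq : ∀ g : Lnu (-ν) H, RSd g = Sd (S19aux.trunc (-ν) T g) := by
    intro g
    apply S19aux.nuPair_left_cancel ν
    intro f
    rw [← hRSd f g, hRtr (S f), S19aux.nuPair_trunc, hSd]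
  have hRSBd_eq : ∀ g : Lnu (-ν) H, RSBd g = Bd (Sd (S19aux.trunc (-ν) T g)) := by
    intro g
    apply S19aux.nuPair_left_cancel ν
    intro f
    rw [← hRSBd f g, hRtr (S (Bop f)), S19aux.nuPair_trunc, hSd, hBd]
  refine ⟨?_, ?_, ?_⟩
  · -- (i) ⇔ (ii)
    constructor
    · rintro hi _ ⟨f, rfl⟩
      obtain ⟨G, hG⟩ := hi f
      refine ⟨-G, ?_⟩
      show R (S (Bop (-G))) = R (S f)
      have e1 : S (f + Bop G) = S f + S (Bop G) := by rw [_root_.map_add]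
      have e2 : S (Bop (-G)) = -S (Bop G) := by rw [_root_.map_neg, _root_.map_neg]
      have h1 : ∀ᵐ t : ℝ, (S (f + Bop G) : ℝ → H) t
          = (S f : ℝ → H) t + (S (Bop G) : ℝ → H) t := by
        rw [e1]; exact S19aux.ae_of_ae_wMeas (Lp.coeFn_add _ _)
      have h2 : ∀ᵐ t : ℝ, (S (Bop (-G)) : ℝ → H) t = -((S (Bop G) : ℝ → H) t) := by
        rw [e2]; exact S19aux.ae_of_ae_wMeas (Lp.coeFn_neg _)
      apply Lp.ext
      apply S19aux.ae_wMeas_of_ae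
      filter_upwards [hG, h1, h2, hR (S f), hR (S (Bop (-G))), hne] with t hGt h1t h2t hRf hRB
        hneT
      rw [hRf, hRB, h2t]
      by_cases h : T ≤ t
      · simp only [h, if_true]
        have hTlt : T < t := lt_of_le_of_ne h (Ne.symm hneT)
        have h0 := hGt hTlt
        rw [h1t] at h0
        rw [eq_neg_of_add_eq_zero_left h0]
      · simp [h]
    · intro hsub f
      obtain ⟨g, hg0⟩ := hsub ⟨f, rfl⟩
      have hg : R (S (Bop g)) = R (S f) := hg0
      refine ⟨-g, ?_⟩
      have e1 : S (f + Bop (-g)) = S f - S (Bop g) := by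
        rw [_root_.map_neg, _root_.map_add, _root_.map_neg, sub_eq_add_neg]
      have h1 : ∀ᵐ t : ℝ, (S (f + Bop (-g)) : ℝ → H) t
          = (S f : ℝ → H) t - (S (Bop g) : ℝ → H) t := by
        rw [e1]; exact S19aux.ae_of_ae_wMeas (Lp.coeFn_sub _ _)
      have h2 : ∀ᵐ t : ℝ, (R (S (Bop g)) : ℝ → H) t = (R (S f) : ℝ → H) t := by
        rw [hg]; exact Filter.Eventually.of_forall fun t => rfl
      filter_upwards [h1, h2, hR (S f), hR (S (Bop g))] with t h1t h2t hRf hRB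
      intro hTlt
      rw [h1t]
      rw [hRB, hRf] at h2t
      simp only [hTlt.le, if_true] at h2t
      rw [h2t, sub_self]
  · -- (ii) ⇔ (iii)
    let T1 : Lnu (-ν) H →L[ℂ] Lnu (-ν) H :=
      ((S19aux.expMul ν (-ν)) ∘L (R ∘L S)) ∘L (S19aux.expMul (-ν) ν)
    let T2 : Lnu (-ν) H₀ →L[ℂ] Lnu (-ν) H :=
      ((S19aux.expMul ν (-ν)) ∘L (R ∘L (S ∘L Bop))) ∘L (S19aux.expMul (-ν) ν)
    have hadj1 : ContinuousLinearMap.adjoint T1 = RSd := by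
      have h : T1 = ContinuousLinearMap.adjoint RSd := by
        rw [ContinuousLinearMap.eq_adjoint_iff]
        intro x y
        have h0 := hRSd (S19aux.expMul (-ν) ν x) y
        rw [S19aux.nuPair_eq_inner, S19aux.nuPair_eq_inner, S19aux.expMul_expMul] at h0
        exact h0
      rw [h, ContinuousLinearMap.adjoint_adjoint]
    have hadj2 : ContinuousLinearMap.adjoint T2 = RSBd := by
      have h : T2 = ContinuousLinearMap.adjoint RSBd := by
        rw [ContinuousLinearMap.eq_adjoint_iff]
        intro x y
        have h0 := hRSBd (S19aux.expMul (-ν) ν x) y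
        rw [S19aux.nuPair_eq_inner, S19aux.nuPair_eq_inner, S19aux.expMul_expMul] at h0
        exact h0
      rw [h, ContinuousLinearMap.adjoint_adjoint]
    have hrange : (Set.range (fun f : Lnu ν H => R (S f)) ⊆
        Set.range (fun g : Lnu ν H₀ => R (S (Bop g)))) ↔ Set.range T1 ⊆ Set.range T2 := by
      constructor
      · rintro hsub _ ⟨u, rfl⟩
        obtain ⟨g, hg0⟩ := hsub ⟨S19aux.expMul (-ν) ν u, rfl⟩
        have hg : R (S (Bop g)) = R (S (S19aux.expMul (-ν) ν u)) := hg0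
        refine ⟨S19aux.expMul ν (-ν) g, ?_⟩
        show S19aux.expMul ν (-ν)
            (R (S (Bop (S19aux.expMul (-ν) ν (S19aux.expMul ν (-ν) g)))))
          = S19aux.expMul ν (-ν) (R (S (S19aux.expMul (-ν) ν u)))
        rw [S19aux.expMul_expMul, hg]
      · rintro hsub _ ⟨f, rfl⟩
        obtain ⟨v, hv⟩ := hsub ⟨S19aux.expMul ν (-ν) f, rfl⟩
        refine ⟨S19aux.expMul (-ν) ν v, ?_⟩
        have h1 : S19aux.expMul (-ν) ν (T2 v) = R (S (Bop (S19aux.expMul (-ν) ν v))) := by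
          show S19aux.expMul (-ν) ν
              (S19aux.expMul ν (-ν) (R (S (Bop (S19aux.expMul (-ν) ν v)))))
            = R (S (Bop (S19aux.expMul (-ν) ν v)))
          rw [S19aux.expMul_expMul]
        have h2 : S19aux.expMul (-ν) ν (T1 (S19aux.expMul ν (-ν) f)) = R (S f) := by
          show S19aux.expMul (-ν) ν
              (S19aux.expMul ν (-ν)
                (R (S (S19aux.expMul (-ν) ν (S19aux.expMul ν (-ν) f)))))
            = R (S f)
          rw [S19aux.expMul_expMul, S19aux.expMul_expMul]
        show R (S (Bop (S19aux.expMul (-ν) ν v))) = R (S f)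
        rw [← h2, ← hv, h1]
    rw [hrange, douglas T1 T2]
    constructor
    · rintro ⟨c', hc', hcd⟩
      exact ⟨c', hc', fun f => by rw [← hadj1, ← hadj2]; exact hcd f⟩
    · rintro ⟨c', hc', hcd⟩
      refine ⟨c', hc', fun w => ?_⟩
      rw [hadj1, hadj2]
      exact hcd w
  · -- (iii) ⇔ (iv)
    constructor
    · rintro ⟨c', hc', hin⟩
      refine ⟨c', hc', fun f hf => ?_⟩
      have hfix : S19aux.trunc (-ν) T f = f := by
        apply Lp.ext
        apply S19aux.ae_wMeas_of_ae
        filter_upwards [S19aux.coeFn_trunc (-ν) T f, hf] with t h1 h2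
        rw [h1]
        by_cases h : T ≤ t
        · rw [if_pos h]
        · rw [if_neg h, h2 (not_le.mp h)]
      have e1 : Sd f = RSd f := by rw [hRSd_eq f, hfix]
      have e2 : Bd (Sd f) = RSBd f := by rw [hRSBd_eq f, hfix]
      rw [e2, e1]
      exact hin f
    · rintro ⟨c', hc', hin⟩
      refine ⟨c', hc', fun f => ?_⟩
      have hsupp : ∀ᵐ t : ℝ, t < T → (S19aux.trunc (-ν) T f : ℝ → H) t = 0 := by
        filter_upwards [S19aux.coeFn_trunc (-ν) T f] with t h1 ht
        rw [h1, if_neg (not_le.mpr ht)]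
      have h0 := hin (S19aux.trunc (-ν) T f) hsupp
      rw [hRSd_eq f, hRSBd_eq f]
      exact h0
end
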